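/- If a quantum state ρ on a bipartite system satisfies ρ ≤ 2^λ σ for some separable state σ, and Λ is an LOCC channel (more generally, a channel mapping separable states to separable states), then Λ(ρ) ≤ 2^λ σ' for some separable state σ'. Hence the max-relative entropy of entanglement E_max is monotone non-increasing under separability-preserving channels. -/

import Mathlib

/-!
A completely positive map `Λ` preserves positive semidefiniteness: writing `X = Bᴴ B`, the
quadratic form of `Λ X` at `w` is the sum, over the rows `b` of `B`, of the quadratic form of the
Choi matrix at `b ⊗ w`. Applying `Λ` to `σ` and to `2^λ σ - ρ` therefore turns every witness of
`ρ ≤ 2^λ σ` into the witness `Λ σ` of `Λ ρ ≤ 2^λ Λ σ`, so the feasible set of `E_max` can only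
grow under `Λ` and its infimum can only drop; the feasible set of a state is bounded below by `0`
because `tr ρ = 1`.
-/

open Matrix
open scoped ComplexOrder BigOperators Classical Kronecker

noncomputable section

/-- A bipartite state is separable if it is a convex combination of product states. -/
def IsSeparableState {α β : Type*} [Fintype α] [Fintype β]
    (ρ : Matrix (α × β) (α × β) ℂ) : Prop :=
  ∃ (m : ℕ) (p : Fin m → ℝ) (x : Fin m → Matrix α α ℂ) (y : Fin m → Matrix β β ℂ),
    (∀ i, 0 ≤ p i) ∧ (∑ i, p i = 1) ∧
    (∀ i, (x i).PosSemidef ∧ (x i).trace = 1) ∧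
    (∀ i, (y i).PosSemidef ∧ (y i).trace = 1) ∧
    ρ = ∑ i, p i • (x i ⊗ₖ y i)

/-- The Choi matrix of a map between matrix spaces. -/
def choiMatrix {ι κ : Type*} [Fintype ι] [DecidableEq ι] [Fintype κ]
    (F : Matrix ι ι ℂ → Matrix κ κ ℂ) : Matrix (ι × κ) (ι × κ) ℂ :=
  fun x y => F (Matrix.single x.1 y.1 1) x.2 y.2

/-- A map is completely positive iff its Choi matrix is positive semidefinite. -/
def IsCompletelyPositive {ι κ : Type*} [Fintype ι] [DecidableEq ι] [Fintype κ]
    (F : Matrix ι ι ℂ → Matrix κ κ ℂ) : Prop :=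
  (choiMatrix F).PosSemidef

/-- Feasible set for the max-relative entropy of entanglement:
`{λ : ρ ≤ 2^λ σ, σ separable state}`. -/
def emaxSet {α β : Type*} [Fintype α] [Fintype β]
    (ρ : Matrix (α × β) (α × β) ℂ) : Set ℝ :=
  {l : ℝ | ∃ σ : Matrix (α × β) (α × β) ℂ, IsSeparableState σ ∧ σ.PosSemidef ∧ σ.trace = 1 ∧
      (((2 : ℝ) ^ l) • σ - ρ).PosSemidef}

/-- Max-relative entropy of entanglement `E_max(ρ) = inf{λ : ρ ≤ 2^λ σ, σ separable}`. -/
def Emax {α β : Type*} [Fintype α] [Fintype β]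
    (ρ : Matrix (α × β) (α × β) ℂ) : EReal :=
  if (emaxSet ρ).Nonempty then ((sInf (emaxSet ρ) : ℝ) : EReal) else ⊤

section ChoiMatrix

variable {ι κ : Type*} [Fintype ι] [DecidableEq ι] [Fintype κ]
  (F : Matrix ι ι ℂ →ₗ[ℂ] Matrix κ κ ℂ)

theorem apply_eq_sum_choiMatrix (X : Matrix ι ι ℂ) (k l : κ) :
    F X k l = ∑ i, ∑ j, X i j * choiMatrix F (i, k) (j, l) := by
  have hX : X = ∑ i, ∑ j, X i j • Matrix.single i j (1 : ℂ) := by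
    simpa [Matrix.smul_single] using Matrix.matrix_eq_sum_single X
  conv_lhs => rw [hX]
  simp only [map_sum, map_smul, Matrix.sum_apply, Matrix.smul_apply, smul_eq_mul, choiMatrix]

theorem isHermitian_apply_of_isHermitian_choiMatrix (hF : (choiMatrix F).IsHermitian)
    {X : Matrix ι ι ℂ} (hX : X.IsHermitian) : (F X).IsHermitian := by
  ext k l
  rw [Matrix.conjTranspose_apply, apply_eq_sum_choiMatrix, apply_eq_sum_choiMatrix,
    Finset.sum_comm]
  simp_rw [star_sum, star_mul', hX.apply, hF.apply]

theorem star_dotProduct_apply_conjTranspose_mul_self_mulVec {μ : Type*} [Fintype μ]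
    (B : Matrix μ ι ℂ) (w : κ → ℂ) :
    star w ⬝ᵥ F (Bᴴ * B) *ᵥ w =
      ∑ r, star (fun p : ι × κ => B r p.1 * w p.2) ⬝ᵥ
        choiMatrix F *ᵥ fun p : ι × κ => B r p.1 * w p.2 := by
  simp only [dotProduct, Matrix.mulVec, Fintype.sum_prod_type, Pi.star_apply,
    apply_eq_sum_choiMatrix F, Matrix.mul_apply, Matrix.conjTranspose_apply, Finset.sum_mul,
    Finset.mul_sum]
  -- bring both sides to the summation order `r, i, j, k, l`
  simp_rw [Finset.sum_comm (t := (Finset.univ : Finset μ)),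
    Finset.sum_comm (s := (Finset.univ : Finset κ)) (t := (Finset.univ : Finset ι))]
  congr! 5
  rw [star_mul']
  ring

theorem IsCompletelyPositive.posSemidef_apply (hF : IsCompletelyPositive F)
    {X : Matrix ι ι ℂ} (hX : X.PosSemidef) : (F X).PosSemidef := by
  open scoped MatrixOrder in
  obtain ⟨B, rfl⟩ := CStarAlgebra.nonneg_iff_eq_star_mul_self.mp hX.nonneg
  refine .of_dotProduct_mulVec_nonneg (isHermitian_apply_of_isHermitian_choiMatrix F hF.1 hX.1)
    fun w => ?_
  rw [star_eq_conjTranspose, star_dotProduct_apply_conjTranspose_mul_self_mulVec]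
  exact Finset.sum_nonneg fun r _ => hF.dotProduct_mulVec_nonneg _

end ChoiMatrix

section Emax

variable {α β α' β' : Type*} [Fintype α] [Fintype β] [Fintype α'] [Fintype β']

theorem bddBelow_emaxSet {ρ : Matrix (α × β) (α × β) ℂ} (hρ : ρ.trace = 1) :
    BddBelow (emaxSet ρ) := by
  refine ⟨0, fun l ⟨σ, _, _, hσ, hle⟩ => ?_⟩
  have htrace : (((2 : ℝ) ^ l) • σ - ρ).trace = ((2 : ℝ) ^ l - 1 : ℝ) := by
    rw [Matrix.trace_sub, Matrix.trace_smul, hσ, hρ, Complex.real_smul]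
    push_cast
    ring
  have hpow : 1 ≤ (2 : ℝ) ^ l := by
    have := hle.trace_nonneg
    rw [htrace, Complex.zero_le_real] at this
    linarith
  exact (Real.rpow_le_rpow_left_iff one_lt_two).mp (by rwa [Real.rpow_zero])

theorem Emax_le_of_emaxSet_subset {ρ : Matrix (α × β) (α × β) ℂ}
    {τ : Matrix (α' × β') (α' × β') ℂ} (h : emaxSet ρ ⊆ emaxSet τ) (hτ : BddBelow (emaxSet τ)) :
    Emax τ ≤ Emax ρ := by
  by_cases hρ : (emaxSet ρ).Nonempty
  · rw [Emax, Emax, if_pos hρ, if_pos (hρ.mono h)]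
    exact EReal.coe_le_coe_iff.mpr (csInf_le_csInf hτ hρ h)
  · simp [Emax, hρ]

theorem emaxSet_subset_emaxSet_map [DecidableEq α] [DecidableEq β]
    (Λ : Matrix (α × β) (α × β) ℂ →ₗ[ℂ] Matrix (α' × β') (α' × β') ℂ)
    (hCP : IsCompletelyPositive Λ) (hTP : ∀ X, (Λ X).trace = X.trace)
    (hSP : ∀ τ, IsSeparableState τ → IsSeparableState (Λ τ)) (ρ : Matrix (α × β) (α × β) ℂ) :
    emaxSet ρ ⊆ emaxSet (Λ ρ) := by
  rintro l ⟨σ, hσsep, hσ, hσt, hle⟩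
  refine ⟨Λ σ, hSP σ hσsep, hCP.posSemidef_apply Λ hσ, (hTP σ).trans hσt, ?_⟩
  simpa only [map_sub, LinearMap.map_smul_of_tower] using hCP.posSemidef_apply Λ hle

end Emax

theorem emax_monotone_sep_preserving_general
    {α β α' β' : Type*} [Fintype α] [Fintype β] [DecidableEq α] [DecidableEq β]
    [Fintype α'] [Fintype β']
    (Λ : Matrix (α × β) (α × β) ℂ → Matrix (α' × β') (α' × β') ℂ)
    (hadd : ∀ X Y, Λ (X + Y) = Λ X + Λ Y)
    (hsmul : ∀ (c : ℂ) X, Λ (c • X) = c • Λ X)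
    (hCP : IsCompletelyPositive Λ)
    (hTP : ∀ X, (Λ X).trace = X.trace)
    (hSP : ∀ τ, IsSeparableState τ → IsSeparableState (Λ τ))
    (ρ σ : Matrix (α × β) (α × β) ℂ)
    (hρt : ρ.trace = 1)
    (hσsep : IsSeparableState σ) (hσ : σ.PosSemidef) (hσt : σ.trace = 1)
    (l : ℝ) (hle : (((2 : ℝ) ^ l) • σ - ρ).PosSemidef) :
    (∃ σ' : Matrix (α' × β') (α' × β') ℂ, IsSeparableState σ' ∧ σ'.PosSemidef ∧
        σ'.trace = 1 ∧ (((2 : ℝ) ^ l) • σ' - Λ ρ).PosSemidef) ∧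
    Emax (Λ ρ) ≤ Emax ρ := by
  let L : Matrix (α × β) (α × β) ℂ →ₗ[ℂ] Matrix (α' × β') (α' × β') ℂ :=
    { toFun := Λ, map_add' := hadd, map_smul' := hsmul }
  have hsub : emaxSet ρ ⊆ emaxSet (Λ ρ) := emaxSet_subset_emaxSet_map L hCP hTP hSP ρ
  exact ⟨hsub ⟨σ, hσsep, hσ, hσt, hle⟩,
    Emax_le_of_emaxSet_subset hsub (bddBelow_emaxSet ((hTP ρ).trans hρt))⟩

/-- If `ρ ≤ 2^λ σ` for a separable state `σ` and `Λ` is a separability-preserving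
channel, then `Λ(ρ) ≤ 2^λ σ'` for some separable state `σ'`; hence `E_max` is
monotone non-increasing under separability-preserving channels. -/
theorem emax_monotone_sep_preserving
    {α β α' β' : Type*} [Fintype α] [Fintype β] [DecidableEq α] [DecidableEq β]
    [Fintype α'] [Fintype β']
    (Λ : Matrix (α × β) (α × β) ℂ → Matrix (α' × β') (α' × β') ℂ)
    (hadd : ∀ X Y, Λ (X + Y) = Λ X + Λ Y)
    (hsmul : ∀ (c : ℂ) X, Λ (c • X) = c • Λ X)
    (hCP : IsCompletelyPositive Λ)
    (hTP : ∀ X, (Λ X).trace = X.trace)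
    (hSP : ∀ τ, IsSeparableState τ → IsSeparableState (Λ τ))
    (ρ σ : Matrix (α × β) (α × β) ℂ)
    (hρ : ρ.PosSemidef) (hρt : ρ.trace = 1)
    (hσsep : IsSeparableState σ) (hσ : σ.PosSemidef) (hσt : σ.trace = 1)
    (l : ℝ) (hle : (((2 : ℝ) ^ l) • σ - ρ).PosSemidef) :
    (∃ σ' : Matrix (α' × β') (α' × β') ℂ, IsSeparableState σ' ∧ σ'.PosSemidef ∧
        σ'.trace = 1 ∧ (((2 : ℝ) ^ l) • σ' - Λ ρ).PosSemidef) ∧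
    Emax (Λ ρ) ≤ Emax ρ :=
  emax_monotone_sep_preserving_general Λ hadd hsmul hCP hTP hSP ρ σ hρt hσsep hσ hσt l hle

end
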